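/- For all α > 1, σ > 0, a > 0 and reals θ, c, with Δ(u) = Φ((a−u)/σ) − Φ((−a−u)/σ), the following inequality holds: exp((α²−α)c²/(2σ²)) · Δ(θ + (1−α)c) + Φ((−a−θ)/σ)^α · Φ((−a−θ−c)/σ)^{1−α} + Φ((θ−a)/σ)^α · Φ((θ+c−a)/σ)^{1−α} ≤ exp((α²−α)c²/(2σ²)). Equivalently, the Rényi divergence of order α between the rectified Gaussians N^R(θ, σ², [−a,a]) and N^R(θ+c, σ², [−a,a]) is at most α·c²/(2σ²), the Rényi divergence of order α between the Gaussians N(θ, σ²) and N(θ+c, σ²). -/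

import Mathlib

open MeasureTheory Real Filter

noncomputable def phi (x : ℝ) : ℝ := (Real.sqrt (2 * Real.pi))⁻¹ * Real.exp (-(x ^ 2) / 2)

noncomputable def Phi (x : ℝ) : ℝ := ∫ t in Set.Iic x, phi t

/-- Mass of the Gaussian `N(u, σ²)` on `[−a, a]`. -/
noncomputable def Δ (a σ u : ℝ) : ℝ := Phi ((a - u) / σ) - Phi ((-a - u) / σ)

/-!
For `α > 1`, Hölder's inequality with exponents `α` and `α / (α - 1)` gives
`Φ(s)^α Φ(t)^(1-α) ≤ ∫_{-∞}^0 φ(x+s)^α φ(x+t)^(1-α) dx`, and completing the square turns the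
integrand into `exp(α(α-1)(s-t)²/2) · φ(x + αs + (1-α)t)`. Hence each atom term is at most
`exp((α²-α)c²/(2σ²))` times the corresponding tail of the Gaussian with the tilted mean
`θ + (1-α)c`; together with the interior term these three pieces add up to the total mass of
that Gaussian.
-/

namespace MeasureTheory

variable {X : Type*} [MeasurableSpace X] {μ : Measure X}

theorem memLp_ofReal_of_integrable_rpow {p : ℝ} (hp : 0 < p) {w : X → ℝ} (hw : ∀ x, 0 ≤ w x)
    (hw_meas : AEStronglyMeasurable w μ) (hw_int : Integrable (fun x => w x ^ p) μ) :
    MemLp w (ENNReal.ofReal p) μ := by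
  rw [← integrable_norm_rpow_iff hw_meas (by simpa using hp) ENNReal.ofReal_ne_top,
    ENNReal.toReal_ofReal hp.le]
  simpa only [norm_of_nonneg (hw _)] using hw_int

theorem integral_le_integral_rpow_mul_rpow_rpow_mul_integral_rpow {α : ℝ} (hα : 1 < α)
    {f g : X → ℝ} (hf : ∀ x, 0 ≤ f x) (hg : ∀ x, 0 < g x) (hf_meas : AEStronglyMeasurable f μ)
    (hg_int : Integrable g μ) (hfg_int : Integrable (fun x => f x ^ α * g x ^ (1 - α)) μ) :
    ∫ x, f x ∂μ ≤
      (∫ x, f x ^ α * g x ^ (1 - α) ∂μ) ^ (1 / α) * (∫ x, g x ∂μ) ^ ((α - 1) / α) := by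
  have hα0 : 0 < α := by linarith
  have hα1 : α - 1 ≠ 0 := by linarith
  set q := α / (α - 1)
  have hpq : α.HolderConjugate q := (Real.holderConjugate_iff_eq_conjExponent hα).mpr rfl
  -- Hölder is applied to the factorisation `f = (f g^((1-α)/α)) · g^((α-1)/α)`.
  set u : X → ℝ := fun x => f x * g x ^ ((1 - α) / α)
  set v : X → ℝ := fun x => g x ^ ((α - 1) / α)
  have hu_nonneg : ∀ x, 0 ≤ u x := fun x => mul_nonneg (hf x) (rpow_nonneg (hg x).le _)
  have hv_nonneg : ∀ x, 0 ≤ v x := fun x => rpow_nonneg (hg x).le _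
  have huv : ∀ x, u x * v x = f x := fun x => by
    rw [mul_assoc, ← rpow_add (hg x), show (1 - α) / α + (α - 1) / α = 0 by ring, rpow_zero,
      mul_one]
  have hu_pow : ∀ x, u x ^ α = f x ^ α * g x ^ (1 - α) := fun x => by
    rw [mul_rpow (hf x) (rpow_nonneg (hg x).le _), ← rpow_mul (hg x).le,
      div_mul_cancel₀ _ hα0.ne']
  have hv_pow : ∀ x, v x ^ q = g x := fun x => by
    rw [← rpow_mul (hg x).le, show (α - 1) / α * (α / (α - 1)) = 1 by field_simp, rpow_one]
  have hu : MemLp u (ENNReal.ofReal α) μ := by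
    refine memLp_ofReal_of_integrable_rpow hα0 hu_nonneg ?_ (by simpa only [hu_pow] using hfg_int)
    exact hf_meas.mul (hg_int.aemeasurable.pow_const _).aestronglyMeasurable
  have hv : MemLp v (ENNReal.ofReal q) μ :=
    memLp_ofReal_of_integrable_rpow hpq.symm.pos hv_nonneg
      (hg_int.aemeasurable.pow_const _).aestronglyMeasurable (by simpa only [hv_pow] using hg_int)
  simpa only [huv, hu_pow, hv_pow, q, one_div_div] using
    integral_mul_le_Lp_mul_Lq_of_nonneg hpq (Eventually.of_forall hu_nonneg)
      (Eventually.of_forall hv_nonneg) hu hv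

theorem integral_rpow_mul_integral_rpow_le {α : ℝ} (hα : 1 < α) {f g : X → ℝ}
    (hf : ∀ x, 0 ≤ f x) (hg : ∀ x, 0 < g x) (hf_meas : AEStronglyMeasurable f μ)
    (hg_int : Integrable g μ) (hfg_int : Integrable (fun x => f x ^ α * g x ^ (1 - α)) μ) :
    (∫ x, f x ∂μ) ^ α * (∫ x, g x ∂μ) ^ (1 - α) ≤ ∫ x, f x ^ α * g x ^ (1 - α) ∂μ := by
  have hα0 : 0 < α := by linarith
  set F := ∫ x, f x ^ α * g x ^ (1 - α) ∂μ
  set G := ∫ x, g x ∂μ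
  have hF : 0 ≤ F :=
    integral_nonneg fun x => mul_nonneg (rpow_nonneg (hf x) _) (rpow_nonneg (hg x).le _)
  have hG : 0 ≤ G := integral_nonneg fun x => (hg x).le
  calc (∫ x, f x ∂μ) ^ α * G ^ (1 - α)
      ≤ (F ^ (1 / α) * G ^ ((α - 1) / α)) ^ α * G ^ (1 - α) := by
        gcongr
        · exact integral_nonneg hf
        · exact integral_le_integral_rpow_mul_rpow_rpow_mul_integral_rpow hα hf hg hf_meas hg_int
            hfg_int
    _ = F * (G ^ (α - 1) * (G ^ (α - 1))⁻¹) := by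
        rw [mul_rpow (rpow_nonneg hF _) (rpow_nonneg hG _), ← rpow_mul hF, ← rpow_mul hG,
          one_div_mul_cancel hα0.ne', div_mul_cancel₀ _ hα0.ne', rpow_one,
          show 1 - α = -(α - 1) by ring, rpow_neg hG, mul_assoc]
    _ ≤ F := mul_le_of_le_one_right hF mul_inv_le_one

end MeasureTheory

open Set

lemma phi_eq_gaussianPDFReal : phi = ProbabilityTheory.gaussianPDFReal 0 1 := by
  ext x
  simp [phi, ProbabilityTheory.gaussianPDFReal]

lemma phi_pos (x : ℝ) : 0 < phi x := by
  rw [phi_eq_gaussianPDFReal]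
  exact ProbabilityTheory.gaussianPDFReal_pos _ _ _ one_ne_zero

lemma integrable_phi : Integrable phi := by
  rw [phi_eq_gaussianPDFReal]
  exact ProbabilityTheory.integrable_gaussianPDFReal _ _

lemma integral_phi : ∫ x, phi x = 1 := by
  rw [phi_eq_gaussianPDFReal]
  exact ProbabilityTheory.integral_gaussianPDFReal_eq_one _ one_ne_zero

lemma phi_rpow_mul_phi_rpow (α s t x : ℝ) :
    phi (x + s) ^ α * phi (x + t) ^ (1 - α) =
      exp (α * (α - 1) * (s - t) ^ 2 / 2) * phi (x + (α * s + (1 - α) * t)) := by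
  have phi_eq_exp (y : ℝ) : phi y = exp (-(y ^ 2) / 2 - log (sqrt (2 * π))) := by
    rw [exp_sub, exp_log (sqrt_pos.2 (by positivity)), phi]
    ring
  simp only [phi_eq_exp, ← exp_mul, ← exp_add]
  ring_nf

lemma Phi_eq_integral_Iic_zero (s : ℝ) : Phi s = ∫ x in Iic 0, phi (x + s) := by
  rw [Phi, ← (measurePreserving_add_right volume s).setIntegral_preimage_emb
    (measurableEmbedding_addRight s) phi (Iic s)]
  simp

lemma Phi_add_Phi_neg (s : ℝ) : Phi s + Phi (-s) = 1 := by
  have h : Phi (-s) = ∫ x in Ioi s, phi x := by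
    rw [Phi, ← integral_comp_neg_Ioi]
    simp [phi]
  rw [Phi, h, intervalIntegral.integral_Iic_add_Ioi integrable_phi.integrableOn
    integrable_phi.integrableOn, integral_phi]

theorem Phi_rpow_mul_Phi_rpow_le {α : ℝ} (hα : 1 < α) (s t : ℝ) :
    Phi s ^ α * Phi t ^ (1 - α) ≤
      exp (α * (α - 1) * (s - t) ^ 2 / 2) * Phi (α * s + (1 - α) * t) := by
  simp only [Phi_eq_integral_Iic_zero, ← integral_const_mul, ← phi_rpow_mul_phi_rpow]
  refine integral_rpow_mul_integral_rpow_le hα (fun x => (phi_pos _).le) (fun x => phi_pos _)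
    (integrable_phi.comp_add_right s).aestronglyMeasurable.restrict
    (integrable_phi.comp_add_right t).integrableOn ?_
  simp only [phi_rpow_mul_phi_rpow]
  exact ((integrable_phi.comp_add_right _).const_mul _).integrableOn

theorem Phi_div_rpow_mul_Phi_div_rpow_le {α : ℝ} (hα : 1 < α) (σ y z : ℝ) :
    Phi (y / σ) ^ α * Phi (z / σ) ^ (1 - α) ≤
      exp ((α ^ 2 - α) * (y - z) ^ 2 / (2 * σ ^ 2)) * Phi ((α * y + (1 - α) * z) / σ) := by
  convert Phi_rpow_mul_Phi_rpow_le hα (y / σ) (z / σ) using 3 <;> ring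

theorem rectified_gaussian_renyi_amplification_general (α σ a θ c : ℝ)
    (hα : 1 < α) :
    Real.exp ((α ^ 2 - α) * c ^ 2 / (2 * σ ^ 2)) * Δ a σ (θ + (1 - α) * c) +
        Phi ((-a - θ) / σ) ^ α * Phi ((-a - θ - c) / σ) ^ (1 - α) +
        Phi ((θ - a) / σ) ^ α * Phi ((θ + c - a) / σ) ^ (1 - α) ≤
      Real.exp ((α ^ 2 - α) * c ^ 2 / (2 * σ ^ 2)) := by
  set u := θ + (1 - α) * c
  have lower : Phi ((-a - θ) / σ) ^ α * Phi ((-a - θ - c) / σ) ^ (1 - α) ≤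
      exp ((α ^ 2 - α) * c ^ 2 / (2 * σ ^ 2)) * Phi ((-a - u) / σ) := by
    convert Phi_div_rpow_mul_Phi_div_rpow_le hα σ (-a - θ) (-a - θ - c) using 3 <;> ring
  have upper : Phi ((θ - a) / σ) ^ α * Phi ((θ + c - a) / σ) ^ (1 - α) ≤
      exp ((α ^ 2 - α) * c ^ 2 / (2 * σ ^ 2)) * Phi ((u - a) / σ) := by
    convert Phi_div_rpow_mul_Phi_div_rpow_le hα σ (θ - a) (θ + c - a) using 3 <;> ring
  have total : Phi ((a - u) / σ) + Phi ((u - a) / σ) = 1 := by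
    convert Phi_add_Phi_neg ((a - u) / σ) using 3
    ring
  rw [Δ]
  linear_combination lower + upper + exp ((α ^ 2 - α) * c ^ 2 / (2 * σ ^ 2)) * total

/-- The Rényi divergence of order `α` between two rectified Gaussians is at most
that between the corresponding Gaussians, `α·c²/(2σ²)`. -/
theorem rectified_gaussian_renyi_amplification (α σ a θ c : ℝ)
    (hα : 1 < α) (hσ : 0 < σ) (ha : 0 < a) :
    Real.exp ((α ^ 2 - α) * c ^ 2 / (2 * σ ^ 2)) * Δ a σ (θ + (1 - α) * c) +
        Phi ((-a - θ) / σ) ^ α * Phi ((-a - θ - c) / σ) ^ (1 - α) +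
        Phi ((θ - a) / σ) ^ α * Phi ((θ + c - a) / σ) ^ (1 - α) ≤
      Real.exp ((α ^ 2 - α) * c ^ 2 / (2 * σ ^ 2)) :=
  rectified_gaussian_renyi_amplification_general α σ a θ c hα
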